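/- arXiv:1407.8543 — 5 statements merged into one kernel-verified Lean document; each statement's English description precedes it below -/
import Mathlib

section
/- Let n be a positive integer, c_{jk} (1 ≤ j < k ≤ n) and ℓ_1,…,ℓ_n fixed integers, and let (C(c,ℓ), ρ) be the corresponding Grossberg–Karshon twisted cube. Then (C(c,ℓ), ρ) is untwisted if and only if m_{σ,k} ≥ 0 for every σ ∈ {+,−}^n and every k with 1 ≤ k ≤ n. -/
open Finset

/-- `A_j(x) = ℓ_j − Σ_{k>j} c_{jk} x_k` (for the last index the sum is empty). -/
noncomputable def GKA {n : ℕ} (c : Fin n → Fin n → ℤ) (ℓ : Fin n → ℤ)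
    (j : Fin n) (x : Fin n → ℝ) : ℝ :=
  (ℓ j : ℝ) - ∑ k ∈ Finset.univ.filter (fun k : Fin n => j < k), (c j k : ℝ) * x k

/-- The Grossberg–Karshon twisted cube `C(c,ℓ)`. -/
noncomputable def GKcube {n : ℕ} (c : Fin n → Fin n → ℤ) (ℓ : Fin n → ℤ) :
    Set (Fin n → ℝ) :=
  {x | ∀ j : Fin n, (GKA c ℓ j x < x j ∧ x j < 0) ∨ (0 ≤ x j ∧ x j ≤ GKA c ℓ j x)}

/-- `sgn(t) = 1` for `t < 0` and `−1` for `t ≥ 0`. -/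
noncomputable def GKsgn (t : ℝ) : ℝ := if t < 0 then 1 else -1

open Classical in
/-- The density function `ρ`: `ρ(x) = (−1)^n ∏_k sgn(x_k)` on `C(c,ℓ)`, `0` elsewhere. -/
noncomputable def GKrho {n : ℕ} (c : Fin n → Fin n → ℤ) (ℓ : Fin n → ℤ)
    (x : Fin n → ℝ) : ℝ :=
  if x ∈ GKcube c ℓ then (-1 : ℝ) ^ n * ∏ k : Fin n, GKsgn (x k) else 0

/-- `(C(c,ℓ), ρ)` is untwisted: `C(c,ℓ)` is closed, convex, the convex hull of a
finite set, and `ρ ≡ 1` on `C(c,ℓ)`.  "Twisted" is the negation of this. -/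
noncomputable def GKUntwisted {n : ℕ} (c : Fin n → Fin n → ℤ) (ℓ : Fin n → ℤ) : Prop :=
  IsClosed (GKcube c ℓ) ∧ Convex ℝ (GKcube c ℓ) ∧
  (∃ S : Finset (Fin n → ℝ), GKcube c ℓ = convexHull ℝ (S : Set (Fin n → ℝ))) ∧
  (∀ x ∈ GKcube c ℓ, GKrho c ℓ x = 1)

/-- The Cartier data `m_σ`, defined by downward recursion:
`m_{σ,k} = 0` if `σ_k = +` (encoded `false`), and
`m_{σ,k} = ℓ_k − Σ_{s>k} c_{ks} m_{σ,s}` if `σ_k = −` (encoded `true`). -/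
def GKm {n : ℕ} (c : Fin n → Fin n → ℤ) (ℓ : Fin n → ℤ) (σ : Fin n → Bool)
    (k : Fin n) : ℤ :=
  if σ k then
    ℓ k - ∑ s ∈ (Finset.univ.filter fun s : Fin n => k < s).attach,
      c k s.1 * GKm c ℓ σ s.1
  else 0
termination_by n - k.val
decreasing_by
  have h := s.2
  simp only [Finset.mem_filter, Finset.mem_univ, true_and, Fin.lt_def] at h
  omega

/-- `A` is the Cartan matrix of a complex semisimple Lie algebra of rank `r`,
i.e. a generalized Cartan matrix of finite type: diagonal entries `2`,
nonpositive off-diagonal entries, `A_{ab} = 0 ↔ A_{ba} = 0`, and `A` is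
symmetrizable by positive rationals `d_a` with `(d_a A_{ab})` symmetric
positive definite. -/
def IsCartanMatrix {r : ℕ} (A : Matrix (Fin r) (Fin r) ℤ) : Prop :=
  (∀ a, A a a = 2) ∧
  (∀ a b, a ≠ b → A a b ≤ 0) ∧
  (∀ a b, A a b = 0 ↔ A b a = 0) ∧
  (∃ d : Fin r → ℚ, (∀ a, 0 < d a) ∧
    (∀ a b, d a * (A a b : ℚ) = d b * (A b a : ℚ)) ∧
    (∀ x : Fin r → ℚ, x ≠ 0 → 0 < ∑ a, ∑ b, x a * d a * (A a b : ℚ) * x b))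

/-- `(w_0, …, w_s)` is a diagram walk followed by the condition that the final
root appears in `λ`: a `λ`-walk.  (Successive entries are distinct and adjacent
in the Dynkin diagram, and `λ_{w_s} > 0`.) -/
def IsLambdaWalkSeq {r : ℕ} (A : Matrix (Fin r) (Fin r) ℤ) (lam : Fin r → ℤ)
    {s : ℕ} (w : Fin (s + 1) → Fin r) : Prop :=
  (∀ t : Fin s, w t.castSucc ≠ w t.succ ∧ A (w t.castSucc) (w t.succ) < 0) ∧
  0 < lam (w (Fin.last s))

/-- `(w_0, w_1, …, w_s)` is a hesitant `λ`-walk: `s ≥ 1`, `w_0 = w_1`, the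
walking component `(w_1, …, w_s)` is a diagram walk, and `λ_{w_s} > 0`. -/
def IsHesitantLambdaWalkSeq {r : ℕ} (A : Matrix (Fin r) (Fin r) ℤ)
    (lam : Fin r → ℤ) {s : ℕ} (w : Fin (s + 1) → Fin r) : Prop :=
  1 ≤ s ∧ w 0 = w 1 ∧
  (∀ t : Fin s, 1 ≤ t.val →
    (w t.castSucc ≠ w t.succ ∧ A (w t.castSucc) (w t.succ) < 0)) ∧
  0 < lam (w (Fin.last s))

/-- The word `i = (i_1, …, i_n)` is hesitant-`λ`-walk-avoiding: no subword
(subsequence, given by a strictly increasing reindexing `j`) is a hesitant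
`λ`-walk. -/
def HesitantLambdaWalkAvoiding {r n : ℕ} (A : Matrix (Fin r) (Fin r) ℤ)
    (lam : Fin r → ℤ) (i : Fin n → Fin r) : Prop :=
  ¬ ∃ (s : ℕ) (j : Fin (s + 1) → Fin n), StrictMono j ∧
      IsHesitantLambdaWalkSeq A lam (i ∘ j)

/-- Minimality of a hesitant `λ`-walk `(w_0, …, w_s)`: the entries of the
walking component `w_1, …, w_s` are pairwise distinct, and if `s ≥ 2` then
`λ_{w_t} = 0` for `0 ≤ t ≤ s − 1`. -/
def MinimalHLW {r s : ℕ} (lam : Fin r → ℤ) (w : Fin (s + 1) → Fin r) : Prop :=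
  (∀ p q : Fin (s + 1), 1 ≤ p.val → 1 ≤ q.val → w p = w q → p = q) ∧
  (2 ≤ s → ∀ t : Fin (s + 1), t.val ≤ s - 1 → lam (w t) = 0)


/-!
If every `m_σ` is nonnegative, a downward induction over the coordinates shows that each point `x`
of `C(c,ℓ)` satisfies `0 ≤ x_j ≤ A_j(x)` and that its projection to the coordinates `≥ j` is a
convex combination of the projected `m_σ`. The step works because `A_j` is affine and
`A_j(m_σ) = m_{σ',j}` where `σ'` is `σ` with `σ_j = −`, while `m_{σ,j} = 0` when `σ_j = +`: the new
coordinate `x_j ∈ [0, A_j(x)]` interpolates between the two choices of `σ_j`. Hence `C(c,ℓ)` is the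
polytope `conv {m_σ}`, whose points have nonnegative coordinates, so `ρ = 1` on it.

Conversely, let `k` be the largest index with some `m_{σ,k} < 0`. The points whose coordinates
`> k` are those of `m_σ` and whose `k`-th coordinate lies in `(m_{σ,k}, 0)` satisfy the defining
conditions from `k` on, and every such point extends downwards to a point of `C(c,ℓ)`. Projecting
to the coordinates `≥ k`, their closure contains the projection of `m_σ`, which no point of
`C(c,ℓ)` has since `A_k(m_σ) = m_{σ,k} < 0`. So `C(c,ℓ)` is not compact, whereas the convex hull
of a finite set is.
-/

section TwistedCube

variable {n : ℕ} (c : Fin n → Fin n → ℤ) (ℓ : Fin n → ℤ)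

def GKvertex (σ : Fin n → Bool) : Fin n → ℝ := fun k => (GKm c ℓ σ k : ℝ)

def GKcond (x : Fin n → ℝ) (j : Fin n) : Prop :=
  (GKA c ℓ j x < x j ∧ x j < 0) ∨ (0 ≤ x j ∧ x j ≤ GKA c ℓ j x)

def GKpolytope : Set (Fin n → ℝ) := {x | ∀ k, 0 ≤ x k ∧ x k ≤ GKA c ℓ k x}

def tailProj (j : ℕ) (x : Fin n → ℝ) : Fin n → ℝ := fun k => if j ≤ k.val then x k else 0

lemma tailProj_zero (x : Fin n → ℝ) : tailProj 0 x = x := by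
  ext k; simp [tailProj]

lemma tailProj_eq_zero (x : Fin n → ℝ) : tailProj n x = 0 := by
  ext k; simp [tailProj, k.isLt]

lemma tailProj_apply_of_le {j : ℕ} {k : Fin n} (h : j ≤ k.val) (x : Fin n → ℝ) :
    tailProj j x k = x k := if_pos h

lemma tailProj_tailProj {i j : ℕ} (h : i ≤ j) (x : Fin n → ℝ) :
    tailProj j (tailProj i x) = tailProj j x := by
  ext k; unfold tailProj; split_ifs <;> first | rfl | omega

lemma tailProj_succ (j : Fin n) (x : Fin n → ℝ) :
    tailProj j x = tailProj (j + 1) x + Pi.single j (x j) := by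
  ext k
  rcases lt_trichotomy k j with h | rfl | h
  · have : ¬ (j : ℕ) ≤ k := by simpa using h
    simp [tailProj, h.ne, this, show ¬ (j : ℕ) + 1 ≤ k by omega]
  · simp [tailProj]
  · have : (j : ℕ) < k := h
    simp [tailProj, h.ne', this.le, show (j : ℕ) + 1 ≤ k by omega]

lemma tailProj_update_of_lt {i : ℕ} {j : Fin n} (h : j.val < i) (x : Fin n → ℝ) (v : ℝ) :
    tailProj i (Function.update x j v) = tailProj i x := by
  ext k; unfold tailProj; split_ifs with hk
  · exact Function.update_of_ne (by rintro rfl; omega) _ _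
  · rfl

lemma continuous_tailProj (j : ℕ) : Continuous (tailProj (n := n) j) :=
  continuous_pi fun k => by
    by_cases h : j ≤ k.val
    · simpa [tailProj, h] using continuous_apply k
    · simpa [tailProj, h] using continuous_const

lemma GKA_tailProj (j : Fin n) (x : Fin n → ℝ) :
    GKA c ℓ j (tailProj (j + 1) x) = GKA c ℓ j x := by
  unfold GKA
  congr 1
  refine Finset.sum_congr rfl fun k hk => ?_
  rw [tailProj_apply_of_le (by simp at hk; omega)]

lemma GKA_congr {j : Fin n} {x y : Fin n → ℝ} (h : tailProj (j + 1) x = tailProj (j + 1) y) :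
    GKA c ℓ j x = GKA c ℓ j y := by
  rw [← GKA_tailProj, h, GKA_tailProj]

lemma GKcond_congr {j : Fin n} {x y : Fin n → ℝ} (h : tailProj j x = tailProj j y) :
    GKcond c ℓ x j ↔ GKcond c ℓ y j := by
  have hA : GKA c ℓ j x = GKA c ℓ j y :=
    GKA_congr c ℓ (by rw [← tailProj_tailProj j.val.le_succ, h, tailProj_tailProj j.val.le_succ])
  have hj : x j = y j := by
    rw [← tailProj_apply_of_le le_rfl x, h, tailProj_apply_of_le le_rfl]
  simp only [GKcond, hA, hj]

lemma GKA_affine (j : Fin n) (x y : Fin n → ℝ) {a b : ℝ} (hab : a + b = 1) :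
    GKA c ℓ j (a • x + b • y) = a * GKA c ℓ j x + b * GKA c ℓ j y := by
  simp only [GKA, mul_sub, Finset.mul_sum, Pi.add_apply, Pi.smul_apply, smul_eq_mul]
  rw [sub_add_sub_comm, ← add_mul, hab, one_mul, ← Finset.sum_add_distrib]
  congr 1
  exact Finset.sum_congr rfl fun _ _ => by ring

lemma GKm_of_false {σ : Fin n → Bool} {k : Fin n} (h : σ k = false) : GKm c ℓ σ k = 0 := by
  rw [GKm, h]; rfl

lemma GKm_congr {σ τ : Fin n → Bool} {k : Fin n} (h : ∀ s, k ≤ s → σ s = τ s) :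
    GKm c ℓ σ k = GKm c ℓ τ k := by
  induction k using WellFoundedGT.induction with
  | _ k ih =>
    rw [GKm, GKm, h k le_rfl]
    congr 2
    refine Finset.sum_congr rfl fun s _ => ?_
    have hks : k < s.1 := (Finset.mem_filter.1 s.2).2
    rw [ih s.1 hks fun t hst => h t (hks.le.trans hst)]

lemma GKvertex_of_true {σ : Fin n → Bool} {k : Fin n} (h : σ k = true) :
    GKvertex c ℓ σ k = GKA c ℓ k (GKvertex c ℓ σ) := by
  unfold GKvertex GKA
  rw [GKm, if_pos h]
  push_cast
  rw [Finset.sum_attach _ fun s => (c k s : ℝ) * (GKm c ℓ σ s : ℝ)]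

lemma tailProj_GKvertex_update (σ : Fin n → Bool) (j : Fin n) (b : Bool) :
    tailProj (j + 1) (GKvertex c ℓ (Function.update σ j b)) =
      tailProj (j + 1) (GKvertex c ℓ σ) := by
  ext k; unfold tailProj GKvertex; split_ifs with hk
  · refine congrArg _ (GKm_congr c ℓ fun s hs => Function.update_of_ne ?_ _ _)
    rintro rfl
    exact absurd hs (by rw [Fin.le_def]; omega)
  · rfl

lemma GKA_GKvertex (σ : Fin n → Bool) (k : Fin n) :
    GKA c ℓ k (GKvertex c ℓ σ) = GKvertex c ℓ (Function.update σ k true) k := by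
  rw [GKvertex_of_true c ℓ (by simp), GKA_congr c ℓ (tailProj_GKvertex_update c ℓ σ k true)]

lemma GKvertex_bounds {k : Fin n} (hk : ∀ τ, 0 ≤ GKm c ℓ τ k) (σ : Fin n → Bool) :
    0 ≤ GKvertex c ℓ σ k ∧ GKvertex c ℓ σ k ≤ GKA c ℓ k (GKvertex c ℓ σ) := by
  refine ⟨Int.cast_nonneg_iff.2 (hk σ), ?_⟩
  cases h : σ k
  · rw [GKA_GKvertex, GKvertex, GKm_of_false c ℓ h, Int.cast_zero]
    exact Int.cast_nonneg_iff.2 (hk _)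
  · exact (GKvertex_of_true c ℓ h).le

lemma convex_GKpolytope : Convex ℝ (GKpolytope c ℓ) := by
  intro x hx y hy a b ha hb hab k
  rw [GKA_affine c ℓ k x y hab]
  simp only [Pi.add_apply, Pi.smul_apply, smul_eq_mul]
  exact ⟨by nlinarith [hx k, hy k], by nlinarith [hx k, hy k]⟩

lemma convex_setOf_GKA_nonneg (j : Fin n) : Convex ℝ {z : Fin n → ℝ | 0 ≤ GKA c ℓ j z} := by
  intro x hx y hy a b ha hb hab
  change 0 ≤ GKA c ℓ j x at hx
  change 0 ≤ GKA c ℓ j y at hy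
  change 0 ≤ GKA c ℓ j _
  rw [GKA_affine c ℓ j x y hab]
  positivity

lemma convex_setOf_add_single_GKA_mem {T : Set (Fin n → ℝ)} (hT : Convex ℝ T) (j : Fin n) :
    Convex ℝ {z | z + Pi.single j (GKA c ℓ j z) ∈ T} := by
  intro x hx y hy a b ha hb hab
  change _ + _ ∈ T
  convert hT hx hy ha hb hab using 1
  rw [GKA_affine c ℓ j x y hab, Pi.single_add, ← smul_eq_mul, ← smul_eq_mul, Pi.single_smul,
    Pi.single_smul]
  module

def tailVertices (j : ℕ) : Set (Fin n → ℝ) := Set.range fun σ => tailProj j (GKvertex c ℓ σ)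

lemma tailProj_mem_convexHull_of_succ {j : Fin n} (hj : ∀ τ, 0 ≤ GKm c ℓ τ j)
    {x : Fin n → ℝ} (hx : GKcond c ℓ x j)
    (hsucc : tailProj (j + 1) x ∈ convexHull ℝ (tailVertices c ℓ (j + 1))) :
    tailProj j x ∈ convexHull ℝ (tailVertices c ℓ j) := by
  set z := tailProj (j + 1) x
  have hvert (σ : Fin n → Bool) (b : Bool) : tailProj j (GKvertex c ℓ (Function.update σ j b)) =
      tailProj (j + 1) (GKvertex c ℓ σ) + Pi.single j (GKvertex c ℓ (Function.update σ j b) j) := by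
    rw [tailProj_succ, tailProj_GKvertex_update]
  have hz : z ∈ convexHull ℝ (tailVertices c ℓ j) := by
    refine convexHull_mono ?_ hsucc
    rintro _ ⟨σ, rfl⟩
    refine ⟨Function.update σ j false, ?_⟩
    simp only [hvert, GKvertex, GKm_of_false c ℓ (Function.update_self j false σ), Int.cast_zero,
      Pi.single_zero, add_zero]
  have hzA : z + Pi.single j (GKA c ℓ j z) ∈ convexHull ℝ (tailVertices c ℓ j) := by
    refine convexHull_min ?_ (convex_setOf_add_single_GKA_mem c ℓ (convex_convexHull ℝ _) j) hsucc
    rintro _ ⟨σ, rfl⟩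
    refine subset_convexHull ℝ _ ⟨Function.update σ j true, ?_⟩
    simp only [hvert, GKA_tailProj, GKA_GKvertex]
  have hA : 0 ≤ GKA c ℓ j x := by
    rw [← GKA_tailProj]
    refine convexHull_min ?_ (convex_setOf_GKA_nonneg c ℓ j) hsucc
    rintro _ ⟨σ, rfl⟩
    change 0 ≤ GKA c ℓ j _
    rw [GKA_tailProj]
    exact (GKvertex_bounds c ℓ hj σ).1.trans (GKvertex_bounds c ℓ hj σ).2
  obtain ⟨hx0, hxA⟩ : 0 ≤ x j ∧ x j ≤ GKA c ℓ j x := hx.resolve_left fun h => by linarith [h.1, h.2]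
  have ht : x j / GKA c ℓ j x ∈ Set.Icc (0 : ℝ) 1 := ⟨div_nonneg hx0 hA, div_le_one_of_le₀ hxA hA⟩
  convert (convex_convexHull ℝ _).add_smul_mem hz hzA ht using 1
  rw [tailProj_succ, ← Pi.single_smul, smul_eq_mul, GKA_tailProj]
  rcases hA.eq_or_lt with h | h
  · rw [← h, mul_zero, le_antisymm (h ▸ hxA) hx0]
  · rw [div_mul_cancel₀ _ h.ne']

variable {c ℓ}

lemma GKcube_subset_convexHull (H : ∀ σ k, 0 ≤ GKm c ℓ σ k) :
    GKcube c ℓ ⊆ convexHull ℝ (Set.range (GKvertex c ℓ)) := by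
  intro x hx
  have key : ∀ j ≤ n, tailProj j x ∈ convexHull ℝ (tailVertices c ℓ j) := by
    intro j hj
    induction hj using Nat.decreasingInduction with
    | self =>
      refine subset_convexHull ℝ _ ⟨fun _ => false, ?_⟩
      simp only [tailProj_eq_zero]
    | of_succ j hj ih =>
      exact tailProj_mem_convexHull_of_succ (j := ⟨j, hj⟩) c ℓ (H · _) (hx _) ih
  simpa [tailVertices, tailProj_zero] using key 0 n.zero_le

lemma convexHull_subset_GKpolytope (H : ∀ σ k, 0 ≤ GKm c ℓ σ k) :
    convexHull ℝ (Set.range (GKvertex c ℓ)) ⊆ GKpolytope c ℓ :=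
  convexHull_min (Set.range_subset_iff.2 fun σ k => GKvertex_bounds c ℓ (H · k) σ)
    (convex_GKpolytope c ℓ)

lemma GKcube_eq_convexHull (H : ∀ σ k, 0 ≤ GKm c ℓ σ k) :
    GKcube c ℓ = convexHull ℝ (Set.range (GKvertex c ℓ)) :=
  (GKcube_subset_convexHull H).antisymm fun _ hx k =>
    Or.inr (convexHull_subset_GKpolytope H hx k)

lemma GKrho_eq_one_of_nonneg {x : Fin n → ℝ} (hx : x ∈ GKcube c ℓ) (h0 : ∀ k, 0 ≤ x k) :
    GKrho c ℓ x = 1 := by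
  have hsgn (k : Fin n) : GKsgn (x k) = -1 := if_neg (h0 k).not_gt
  simp only [GKrho, if_pos hx, hsgn, Finset.prod_const, Finset.card_univ, Fintype.card_fin,
    ← mul_pow, neg_one_mul, neg_neg, one_pow]

theorem GKUntwisted_of_GKm_nonneg (H : ∀ σ k, 0 ≤ GKm c ℓ σ k) : GKUntwisted c ℓ := by
  have hC := GKcube_eq_convexHull H
  refine ⟨hC ▸ (Set.finite_range _).isClosed_convexHull ℝ, hC ▸ convex_convexHull ℝ _,
    ⟨Finset.univ.image (GKvertex c ℓ), by simp [hC]⟩, fun x hx => ?_⟩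
  exact GKrho_eq_one_of_nonneg hx fun k => (convexHull_subset_GKpolytope H (hC ▸ hx) k).1

lemma GKcond_update_self (x : Fin n → ℝ) (j : Fin n) :
    GKcond c ℓ (Function.update x j (min (GKA c ℓ j x) 0 / 2)) j := by
  rw [GKcond, GKA_congr c ℓ (tailProj_update_of_lt (Nat.lt_succ_self _) _ _),
    Function.update_self]
  rcases le_or_gt 0 (GKA c ℓ j x) with hA | hA
  · exact Or.inr ⟨by simp [min_eq_right hA], by simp [hA]⟩
  · exact Or.inl (by constructor <;> simp only [min_eq_left hA.le] <;> linarith)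

lemma exists_mem_GKcube_tailProj_eq {j₀ : Fin n} {y : Fin n → ℝ}
    (hy : ∀ k, j₀ ≤ k → GKcond c ℓ y k) :
    ∃ x ∈ GKcube c ℓ, tailProj j₀ x = tailProj j₀ y := by
  have key : ∀ i ≤ j₀.val, ∃ x, tailProj j₀ x = tailProj j₀ y ∧
      ∀ k : Fin n, i ≤ k.val → GKcond c ℓ x k := by
    intro i hi
    induction hi using Nat.decreasingInduction with
    | self => exact ⟨y, rfl, hy⟩
    | of_succ i hi ih =>
      obtain ⟨x, hxy, hx⟩ := ih
      let j : Fin n := ⟨i, hi.trans j₀.isLt⟩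
      refine ⟨Function.update x j (min (GKA c ℓ j x) 0 / 2),
        by rw [tailProj_update_of_lt hi, hxy], fun k hk => ?_⟩
      rcases hk.eq_or_lt with h | h
      · rw [show k = j from Fin.ext h.symm]
        exact GKcond_update_self x j
      · exact (GKcond_congr c ℓ (tailProj_update_of_lt h _ _)).2 (hx k h)
  obtain ⟨x, hxy, hx⟩ := key 0 j₀.val.zero_le
  exact ⟨x, fun k => hx k k.val.zero_le, hxy⟩

lemma GKm_nonneg_of_isCompact_of_gt (hC : IsCompact (GKcube c ℓ)) {k : Fin n}
    (hk : ∀ τ s, k < s → 0 ≤ GKm c ℓ τ s) (σ : Fin n → Bool) : 0 ≤ GKm c ℓ σ k := by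
  by_contra! hM
  have hσ : σ k = true := by
    by_contra h
    exact hM.ne (GKm_of_false c ℓ (by simpa using h))
  set v := GKvertex c ℓ σ
  have hAv : GKA c ℓ k v = v k := (GKvertex_of_true c ℓ hσ).symm
  have hvk : v k < 0 := Int.cast_lt_zero.2 hM
  let y : ℝ → Fin n → ℝ := fun t => Function.update v k ((1 - t) * v k)
  have hmem : ∀ t ∈ Set.Ioo (0 : ℝ) 1, tailProj k (y t) ∈ tailProj k '' GKcube c ℓ := by
    intro t ht
    refine exists_mem_GKcube_tailProj_eq fun s hs => ?_
    rcases hs.eq_or_lt with rfl | hs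
    · left
      rw [GKA_congr c ℓ (tailProj_update_of_lt (Nat.lt_succ_self _) _ _), hAv]
      simp only [y, Function.update_self]
      constructor <;> nlinarith [ht.1, ht.2]
    · exact (GKcond_congr c ℓ (tailProj_update_of_lt hs _ _)).2
        (Or.inr (GKvertex_bounds c ℓ (hk · s hs) σ))
  have hclosed : IsClosed {t : ℝ | tailProj k (y t) ∈ tailProj k '' GKcube c ℓ} :=
    (hC.image (continuous_tailProj k)).isClosed.preimage
      ((continuous_tailProj k).comp (continuous_const.update k (by fun_prop)))
  have h0 : (0 : ℝ) ∈ closure (Set.Ioo 0 1) := by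
    rw [closure_Ioo zero_ne_one]; exact ⟨le_rfl, zero_le_one⟩
  obtain ⟨x, hx, hxv⟩ := hclosed.closure_subset_iff.2 hmem h0
  have hv : y 0 = v := by simp [y]
  rw [hv] at hxv
  rcases (GKcond_congr c ℓ hxv).1 (hx k) with h | h <;> linarith [h.1]

lemma GKm_nonneg_of_isCompact (hC : IsCompact (GKcube c ℓ)) (σ : Fin n → Bool)
    (k : Fin n) : 0 ≤ GKm c ℓ σ k := by
  induction k using WellFoundedGT.induction generalizing σ with
  | _ k ih => exact GKm_nonneg_of_isCompact_of_gt hC (fun τ s hs => ih s hs τ) σ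

end TwistedCube

theorem statement0_general {n : ℕ} (c : Fin n → Fin n → ℤ) (ℓ : Fin n → ℤ) :
    GKUntwisted c ℓ ↔ ∀ (σ : Fin n → Bool) (k : Fin n), 0 ≤ GKm c ℓ σ k := by
  refine ⟨fun hU => GKm_nonneg_of_isCompact ?_, GKUntwisted_of_GKm_nonneg⟩
  obtain ⟨S, hS⟩ := hU.2.2.1
  exact hS ▸ S.finite_toSet.isCompact_convexHull ℝ

/-- Theorem, Harada–Yang.  For a positive integer `n` and
integers `c = (c_{jk})`, `ℓ = (ℓ_1,…,ℓ_n)`, the Grossberg–Karshon twisted cube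
`(C(c,ℓ), ρ)` is untwisted if and only if `m_{σ,k} ≥ 0` for every
`σ ∈ {+,−}^n` and every `1 ≤ k ≤ n`. -/
theorem statement0 {n : ℕ} (hn : 0 < n) (c : Fin n → Fin n → ℤ) (ℓ : Fin n → ℤ) :
    GKUntwisted c ℓ ↔ ∀ (σ : Fin n → Bool) (k : Fin n), 0 ≤ GKm c ℓ σ k :=
  statement0_general c ℓ
end

section
/- Let c_{ij} (1 ≤ i < j ≤ n) and ℓ_1,…,ℓ_n be fixed integers with ℓ_i ≥ 0 for all i. If there exist an element σ of {+,−}^n and k ∈ {1,…,n} such that m_{σ,k} > 0 and m_{σ,i} ≥ 0 for all i > k, then there exists an increasing sequence of indices 1 ≤ j_1 < j_2 < ⋯ < j_s ≤ n with s ≥ 1 such that: (1) j_1 = k; (2) ℓ_{j_s} > 0; and (3) c_{j_t j_{t+1}} < 0 for all t = 1,…,s−1. -/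
open Finset

/-!
Downward induction on `k`. If `ℓ_k ≤ 0`, then `m_{σ,k} > 0` forces `σ_k = −` and a negative term
`c_{ks} m_{σ,s}` with `s > k`; as `m_{σ,s} ≥ 0`, this means `c_{ks} < 0` and `m_{σ,s} > 0`, so the
chain obtained for `s` can be prefixed by `k`.
-/

def HasIncreasingChain {α : Type*} [Preorder α] (r : α → α → Prop) (p : α → Prop) (a : α) :
    Prop :=
  ∃ (s : ℕ) (j : Fin (s + 1) → α), StrictMono j ∧ j 0 = a ∧ p (j (Fin.last s)) ∧
    ∀ t : Fin s, r (j t.castSucc) (j t.succ)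

namespace HasIncreasingChain

variable {α : Type*} [Preorder α] {r : α → α → Prop} {p : α → Prop} {a b : α}

theorem of_prop (ha : p a) : HasIncreasingChain r p a :=
  ⟨0, fun _ => a, Fin.strictMono_iff_lt_succ.mpr fun t => t.elim0, rfl, ha, fun t => t.elim0⟩

theorem cons (hab : a < b) (hr : r a b) (hb : HasIncreasingChain r p b) :
    HasIncreasingChain r p a := by
  obtain ⟨s, j, hj, hj0, hlast, hstep⟩ := hb
  refine ⟨s + 1, Fin.cons a j, ?_, rfl, ?_, ?_⟩
  · refine Fin.strictMono_cons.mpr ⟨fun i => ?_, hj⟩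
    exact hab.trans_le (hj0 ▸ hj.monotone (Fin.zero_le i))
  · rwa [← Fin.succ_last, Fin.cons_succ]
  · intro t
    cases t using Fin.cases with
    | zero => simpa [hj0] using hr
    | succ t => simpa [← Fin.succ_castSucc] using hstep t

end HasIncreasingChain

theorem GKm_eq {n : ℕ} (c : Fin n → Fin n → ℤ) (ℓ : Fin n → ℤ) (σ : Fin n → Bool) (k : Fin n) :
    GKm c ℓ σ k =
      if σ k then ℓ k - ∑ s ∈ univ.filter (k < ·), c k s * GKm c ℓ σ s else 0 := by
  rw [GKm, Finset.sum_attach _ (fun s => c k s * GKm c ℓ σ s)]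

theorem exists_mul_GKm_neg_of_GKm_pos {n : ℕ} {c : Fin n → Fin n → ℤ} {ℓ : Fin n → ℤ}
    {σ : Fin n → Bool} {k : Fin n} (hk : 0 < GKm c ℓ σ k) (hℓk : ℓ k ≤ 0) :
    ∃ s, k < s ∧ c k s * GKm c ℓ σ s < 0 := by
  rw [GKm_eq] at hk
  split_ifs at hk
  · have hsum : ∑ s ∈ univ.filter (k < ·), c k s * GKm c ℓ σ s < 0 := by omega
    obtain ⟨s, hs, hneg⟩ := Finset.exists_lt_of_sum_lt (hsum.trans_eq Finset.sum_const_zero.symm)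
    exact ⟨s, (Finset.mem_filter.mp hs).2, hneg⟩
  · exact absurd hk (lt_irrefl 0)

theorem hasIncreasingChain_of_GKm_pos {n : ℕ} (c : Fin n → Fin n → ℤ) (ℓ : Fin n → ℤ)
    (σ : Fin n → Bool) (k : Fin n) (hk : 0 < GKm c ℓ σ k)
    (hge : ∀ i, k < i → 0 ≤ GKm c ℓ σ i) :
    HasIncreasingChain (fun i j => c i j < 0) (fun i => 0 < ℓ i) k := by
  induction k using WellFoundedGT.induction with
  | _ k ih =>
  by_cases hℓk : 0 < ℓ k
  · exact .of_prop hℓk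
  obtain ⟨s, hks, hneg⟩ := exists_mul_GKm_neg_of_GKm_pos hk (not_lt.mp hℓk)
  have hcs : c k s < 0 := neg_of_mul_neg_left hneg (hge s hks)
  have hms : 0 < GKm c ℓ σ s := pos_of_mul_neg_right hneg hcs.le
  exact .cons hks hcs (ih s hks hms fun i hi => hge i (hks.trans hi))

theorem statement1_general {n : ℕ} (c : Fin n → Fin n → ℤ) (ℓ : Fin n → ℤ)
    (σ : Fin n → Bool) (k : Fin n)
    (hk : 0 < GKm c ℓ σ k) (hge : ∀ i : Fin n, k < i → 0 ≤ GKm c ℓ σ i) :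
    ∃ (s : ℕ) (j : Fin (s + 1) → Fin n), StrictMono j ∧ j 0 = k ∧
      0 < ℓ (j (Fin.last s)) ∧
      ∀ t : Fin s, c (j t.castSucc) (j t.succ) < 0 :=
  hasIncreasingChain_of_GKm_pos c ℓ σ k hk hge

/-- If `ℓ_i ≥ 0` for all `i`, and there are `σ ∈ {+,−}^n` and
`k` with `m_{σ,k} > 0` and `m_{σ,i} ≥ 0` for all `i > k`, then there is an
increasing sequence of indices `j_1 < ⋯ < j_s` (`s ≥ 1`, here encoded by a
strictly monotone `j : Fin (s+1) → Fin n`, so of length `s + 1 ≥ 1`) with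
`j_1 = k`, `ℓ_{j_s} > 0`, and `c_{j_t j_{t+1}} < 0` for all intermediate `t`. -/
theorem statement1 {n : ℕ} (c : Fin n → Fin n → ℤ) (ℓ : Fin n → ℤ)
    (hℓ : ∀ i, 0 ≤ ℓ i) (σ : Fin n → Bool) (k : Fin n)
    (hk : 0 < GKm c ℓ σ k) (hge : ∀ i : Fin n, k < i → 0 ≤ GKm c ℓ σ i) :
    ∃ (s : ℕ) (j : Fin (s + 1) → Fin n), StrictMono j ∧ j 0 = k ∧
      0 < ℓ (j (Fin.last s)) ∧
      ∀ t : Fin s, c (j t.castSucc) (j t.succ) < 0 :=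
  statement1_general c ℓ σ k hk hge
end

section
/- Let A be the Cartan matrix of a complex semisimple Lie algebra of rank r, let I = (i_1,…,i_n) be a word with entries in {1,…,r}, and let λ = (λ_1,…,λ_r) be a dominant weight (λ_a ≥ 0 for all a). Let (C(c,ℓ), ρ) be the Grossberg–Karshon twisted cube associated to λ and I via c_{jk} = A_{i_j i_k} and ℓ_j = λ_{i_j}. Then (C(c,ℓ), ρ) is untwisted if and only if I is hesitant-λ-walk-avoiding. -/
open Finset

/-!
If the word avoids hesitant `λ`-walks, no `λ`-walk starts at a position repeating an earlier
letter. A downward induction then shows that on the cube every coordinate at a position where no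
`λ`-walk starts vanishes, and that all `A_j(x)` are nonnegative. So `C(c,ℓ)` is the polytope
`{0 ≤ x_j ≤ A_j(x)}`, on which `ρ ≡ 1`; solving `x_j = t_j A_j(x)` parametrizes it by `[0,1]^n`
through a map that is affine in each `t_j`, so it is the convex hull of the images of the `2^n`
vertices of the cube.

Conversely, take a hesitant `λ`-walk `(p, w_0, …, w_m)` with `m` least and then `p` as late as
possible. The weights `B_v = ∏_{v ≤ u < m} (-A(i_{w_u}, i_{w_{u+1}})) · λ(i_{w_m})` at `w_v`,
together with `-B_0 / 2` at `p`, form a point of `C(c,ℓ)` whose only negative coordinate is at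
`p`, so `ρ = -1` there.
-/

namespace GK

section TwistedCube

variable {n : ℕ} (c : Fin n → Fin n → ℤ) (ℓ : Fin n → ℤ)

lemma GKA_congr {j : Fin n} {x y : Fin n → ℝ} (h : ∀ k, j < k → x k = y k) :
    GKA c ℓ j x = GKA c ℓ j y := by
  unfold GKA
  congr 1
  exact sum_congr rfl fun k hk => by rw [h k (mem_filter.1 hk).2]

lemma GKrho_eq_neg_one_pow {x : Fin n → ℝ} (hx : x ∈ GKcube c ℓ) :
    GKrho c ℓ x = (-1) ^ #{k | x k < 0} := by
  rw [GKrho, if_pos hx]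
  simp only [GKsgn, prod_ite, prod_const_one, prod_const, one_mul]
  set a := #{k | x k < 0}
  set b := #{k | ¬ x k < 0}
  have hn : a + b = n := by
    rw [card_filter_add_card_filter_not, card_univ, Fintype.card_fin]
  rw [← hn, pow_add, mul_assoc, ← pow_add, ← two_mul, pow_mul]
  simp

def GKpolytope : Set (Fin n → ℝ) := {x | ∀ j, 0 ≤ x j ∧ x j ≤ GKA c ℓ j x}

lemma GKpolytope_subset_GKcube : GKpolytope c ℓ ⊆ GKcube c ℓ :=
  fun _ hx j => Or.inr (hx j)

lemma isClosed_GKpolytope : IsClosed (GKpolytope c ℓ) := by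
  simp only [GKpolytope, Set.ofPred_forall]
  refine isClosed_iInter fun j => (isClosed_le continuous_const (continuous_apply j)).inter
    (isClosed_le (continuous_apply j) ?_)
  unfold GKA
  fun_prop

lemma GKA_smul_add_smul (j : Fin n) (x y : Fin n → ℝ) {a b : ℝ} (hab : a + b = 1) :
    GKA c ℓ j (a • x + b • y) = a * GKA c ℓ j x + b * GKA c ℓ j y := by
  simp only [GKA, Pi.add_apply, Pi.smul_apply, smul_eq_mul, mul_add, sum_add_distrib,
    mul_sub, mul_sum, mul_left_comm _ a, mul_left_comm _ b]
  linear_combination (ℓ j : ℝ) * hab.symm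

lemma convex_GKpolytope : Convex ℝ (GKpolytope c ℓ) := by
  intro x hx y hy a b ha hb hab j
  simp only [GKA_smul_add_smul c ℓ j x y hab, Pi.add_apply, Pi.smul_apply, smul_eq_mul]
  constructor <;> nlinarith [hx j, hy j]

noncomputable def GKparam (t : Fin n → ℝ) (j : Fin n) : ℝ :=
  t j * ((ℓ j : ℝ) - ∑ k ∈ (univ.filter fun k : Fin n => j < k).attach,
    (c j k : ℝ) * GKparam t k.1)
termination_by n - j.val
decreasing_by
  have h := k.2
  simp only [mem_filter, mem_univ, true_and, Fin.lt_def] at h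
  omega

lemma GKparam_apply (t : Fin n → ℝ) (j : Fin n) :
    GKparam c ℓ t j = t j * GKA c ℓ j (GKparam c ℓ t) := by
  rw [GKparam, GKA, sum_attach _ fun k => (c j k : ℝ) * GKparam c ℓ t k]

lemma GKparam_congr {t t' : Fin n → ℝ} (j : Fin n) (h : ∀ k, j ≤ k → t k = t' k) :
    GKparam c ℓ t j = GKparam c ℓ t' j := by
  induction j using WellFoundedGT.induction with
  | _ j ih =>
    rw [GKparam_apply, GKparam_apply, h j le_rfl,
      GKA_congr c ℓ fun k hk => ih k hk fun m hm => h m (hk.le.trans hm)]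

lemma GKparam_eq_combination_update (t : Fin n → ℝ) (p j : Fin n) :
    GKparam c ℓ t j = (1 - t p) * GKparam c ℓ (Function.update t p 0) j
      + t p * GKparam c ℓ (Function.update t p 1) j := by
  have hfix : ∀ b, ∀ k, p < k →
      GKparam c ℓ (Function.update t p b) k = GKparam c ℓ t k := fun b k hk =>
    GKparam_congr c ℓ k fun m hm => Function.update_of_ne (hk.trans_le hm).ne' _ _
  induction j using WellFoundedGT.induction with
  | _ j ih =>
    rcases lt_trichotomy j p with hjp | rfl | hjp
    · have hsum := GKA_smul_add_smul c ℓ j (GKparam c ℓ (Function.update t p 0))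
        (GKparam c ℓ (Function.update t p 1)) (a := 1 - t p) (b := t p) (by ring)
      rw [GKparam_apply c ℓ t, GKparam_apply c ℓ (Function.update t p 0),
        GKparam_apply c ℓ (Function.update t p 1), Function.update_of_ne hjp.ne,
        Function.update_of_ne hjp.ne,
        GKA_congr c ℓ (y := (1 - t p) • _ + t p • _) fun k hk => ih k hk, hsum]
      ring
    · rw [GKparam_apply c ℓ t, GKparam_apply c ℓ (Function.update t j 0),
        GKparam_apply c ℓ (Function.update t j 1), GKA_congr c ℓ (hfix 1),
        Function.update_self, Function.update_self]
      ring
    · rw [hfix 0 j hjp, hfix 1 j hjp]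
      ring

noncomputable def GKvertices : Finset (Fin n → ℝ) :=
  univ.image fun σ : Fin n → Bool => GKparam c ℓ fun k => if σ k then 1 else 0

lemma GKparam_mem_convexHull {t : Fin n → ℝ} (ht : t ∈ Set.Icc 0 1) :
    GKparam c ℓ t ∈ convexHull ℝ (GKvertices c ℓ : Set (Fin n → ℝ)) := by
  suffices ∀ s : Finset (Fin n), ∀ t ∈ Set.Icc (0 : Fin n → ℝ) 1,
      (∀ k ∉ s, t k = 0 ∨ t k = 1) →
      GKparam c ℓ t ∈ convexHull ℝ (GKvertices c ℓ : Set (Fin n → ℝ)) from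
    this univ t ht fun k hk => absurd (mem_univ k) hk
  intro s
  induction s using Finset.induction_on with
  | empty =>
    intro t _ h01
    refine subset_convexHull ℝ _ (mem_image.2 ⟨fun k => decide (t k = 1), mem_univ _, ?_⟩)
    congr 1
    funext k
    rcases h01 k (notMem_empty k) with h | h <;> simp [h]
  | insert p s _ ih =>
    intro t ht h01
    have hupd : ∀ b : ℝ, b = 0 ∨ b = 1 →
        GKparam c ℓ (Function.update t p b) ∈ convexHull ℝ (GKvertices c ℓ : Set _) := by
      intro b hb
      have hb01 : 0 ≤ b ∧ b ≤ 1 := by rcases hb with rfl | rfl <;> norm_num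
      refine ih _ ⟨fun k => ?_, fun k => ?_⟩ fun k hk => ?_ <;>
        rcases eq_or_ne k p with rfl | hkp
      · simpa using hb01.1
      · simpa [hkp] using ht.1 k
      · simpa using hb01.2
      · simpa [hkp] using ht.2 k
      · simpa using hb
      · simpa [hkp] using h01 k (by simp [hkp, hk])
    have hcomb : GKparam c ℓ t = (1 - t p) • GKparam c ℓ (Function.update t p 0)
        + t p • GKparam c ℓ (Function.update t p 1) :=
      funext fun j => GKparam_eq_combination_update c ℓ t p j
    rw [hcomb]
    exact convex_convexHull ℝ _ (hupd 0 (.inl rfl)) (hupd 1 (.inr rfl))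
      (sub_nonneg.2 (ht.2 p)) (ht.1 p) (by ring)

lemma exists_GKparam_eq {x : Fin n → ℝ} (hx : x ∈ GKpolytope c ℓ) :
    ∃ t ∈ Set.Icc (0 : Fin n → ℝ) 1, GKparam c ℓ t = x := by
  -- where `GKA c ℓ j x = 0` we also have `x j = 0`, and `x j / 0 = 0` is the right value
  refine ⟨fun j => x j / GKA c ℓ j x, ⟨fun j => div_nonneg (hx j).1 ((hx j).1.trans (hx j).2),
    fun j => div_le_one_of_le₀ (hx j).2 ((hx j).1.trans (hx j).2)⟩, funext fun j => ?_⟩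
  induction j using WellFoundedGT.induction with
  | _ j ih =>
    rw [GKparam_apply, GKA_congr c ℓ ih]
    exact div_mul_cancel_of_imp fun h => le_antisymm (h ▸ (hx j).2) (hx j).1

lemma GKA_sum_single_sub_single {ι : Type*} (k : Fin n) (s : Finset ι) (q : ι → Fin n)
    (b : ι → ℝ) (p : Fin n) (b' : ℝ) :
    GKA c ℓ k (∑ u ∈ s, Pi.single (q u) (b u) - Pi.single p b') =
      ℓ k - ∑ u ∈ s, (if k < q u then (c k (q u) : ℝ) * b u else 0)
        + if k < p then (c k p : ℝ) * b' else 0 := by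
  have hsingle : ∀ q b, ∑ x with k < x, (c k x : ℝ) * Pi.single q b x =
      if k < q then (c k q : ℝ) * b else 0 := fun q b => by
    simp [Pi.single_apply, mul_ite, sum_ite_eq']
  simp only [GKA, Pi.sub_apply, Finset.sum_apply, mul_sub, sum_sub_distrib, mul_sum]
  rw [sum_comm]
  simp only [hsingle]
  ring

theorem GKpolytope_eq_convexHull
    (h : ∀ t ∈ Set.Icc (0 : Fin n → ℝ) 1, GKparam c ℓ t ∈ GKpolytope c ℓ) :
    GKpolytope c ℓ = convexHull ℝ (GKvertices c ℓ : Set (Fin n → ℝ)) := by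
  refine subset_antisymm (fun x hx => ?_) (convexHull_min ?_ (convex_GKpolytope c ℓ))
  · obtain ⟨t, ht, rfl⟩ := exists_GKparam_eq c ℓ hx
    exact GKparam_mem_convexHull c ℓ ht
  · simp only [GKvertices, coe_image, coe_univ, Set.image_univ, Set.range_subset_iff]
    exact fun σ => h _ ⟨fun k => by dsimp only; split_ifs <;> norm_num,
      fun k => by dsimp only; split_ifs <;> norm_num⟩

end TwistedCube

variable {r n : ℕ} (A : Matrix (Fin r) (Fin r) ℤ) (lam : Fin r → ℤ) (i : Fin n → Fin r)

def IsStep (p q : Fin n) : Prop := p < q ∧ i p ≠ i q ∧ A (i p) (i q) < 0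

/-- The subword of `i` at the positions `J 0 < J 1 < ⋯ < J s` is a `λ`-walk; the values of
`J` beyond `s` play no role. -/
def IsLamWalk (s : ℕ) (J : ℕ → Fin n) : Prop :=
  (∀ v < s, IsStep A i (J v) (J (v + 1))) ∧ 0 < lam (i (J s))

def StartsLamWalk (q : Fin n) : Prop := ∃ s J, J 0 = q ∧ IsLamWalk A lam i s J

variable {A lam i}

namespace IsLamWalk

variable {s : ℕ} {J : ℕ → Fin n}

lemma strictMonoOn (h : IsLamWalk A lam i s J) : StrictMonoOn J (Set.Iic s) :=
  strictMonoOn_Iic_of_lt_succ fun v hv => (h.1 v hv).1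

lemma lt_iff_lt (h : IsLamWalk A lam i s J) {u v : ℕ} (hu : u ≤ s) (hv : v ≤ s) :
    J u < J v ↔ u < v :=
  h.strictMonoOn.lt_iff_lt hu hv

lemma truncate (h : IsLamWalk A lam i s J) {v : ℕ} (hv : v ≤ s) (hlam : 0 < lam (i (J v))) :
    IsLamWalk A lam i v J :=
  ⟨fun u hu => h.1 u (by omega), hlam⟩

lemma drop (h : IsLamWalk A lam i s J) {u : ℕ} (hu : u ≤ s) :
    IsLamWalk A lam i (s - u) fun t => J (u + t) :=
  ⟨fun t ht => h.1 (u + t) (by omega), by simpa [Nat.add_sub_cancel' hu] using h.2⟩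

lemma shortcut (h : IsLamWalk A lam i s J) {v q : ℕ} (hvq : v < q) (hq : q ≤ s)
    (hstep : IsStep A i (J v) (J q)) :
    IsLamWalk A lam i (s - (q - v - 1)) fun t => if t ≤ v then J t else J (t + (q - v - 1)) := by
  refine ⟨fun t ht => ?_, ?_⟩
  · rcases lt_trichotomy t v with htv | rfl | htv
    · simpa [htv.le, Nat.succ_le_of_lt htv] using h.1 t (by omega)
    · simpa [show t + 1 + (q - t - 1) = q by omega] using hstep
    · simpa [show ¬ t ≤ v by omega, show ¬ t < v by omega,
        show t + 1 + (q - v - 1) = t + (q - v - 1) + 1 by omega]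
        using h.1 (t + (q - v - 1)) (by omega)
  · simpa [show ¬ s - (q - v - 1) ≤ v by omega, show s - (q - v - 1) + (q - v - 1) = s by omega]
      using h.2

lemma cons (h : IsLamWalk A lam i s J) {k : Fin n} (hstep : IsStep A i k (J 0)) :
    IsLamWalk A lam i (s + 1) fun | 0 => k | t + 1 => J t :=
  ⟨fun | 0, _ => hstep | t + 1, ht => h.1 t (by omega), h.2⟩

end IsLamWalk

lemma not_hesitantLambdaWalkAvoiding_iff :
    ¬ HesitantLambdaWalkAvoiding A lam i ↔
      ∃ p s J, p < J 0 ∧ i p = i (J 0) ∧ IsLamWalk A lam i s J := by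
  rw [HesitantLambdaWalkAvoiding, not_not]
  constructor
  · rintro ⟨s, j, hj, hs, h01, hstep, hlast⟩
    set J : ℕ → Fin n := fun u => j ⟨min (u + 1) s, by omega⟩
    have hJ : ∀ u (hu : u + 1 ≤ s), J u = j ⟨u + 1, by omega⟩ := fun u hu => by
      simp only [J, min_eq_left hu]
    refine ⟨j 0, s - 1, J, ?_, ?_, fun u hu => ?_, ?_⟩
    · rw [hJ 0 hs]
      exact hj (Fin.mk_lt_mk.2 Nat.zero_lt_one)
    · have h1 : (⟨0 + 1, by omega⟩ : Fin (s + 1)) = 1 :=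
        Fin.ext (Nat.mod_eq_of_lt (Nat.succ_lt_succ hs)).symm
      rw [hJ 0 hs, h1]
      exact h01
    · obtain ⟨hne, hA⟩ := hstep ⟨u + 1, by omega⟩ (Nat.le_add_left 1 u)
      rw [hJ u (by omega), hJ (u + 1) (by omega)]
      exact ⟨hj (Fin.mk_lt_mk.2 (Nat.lt_succ_self _)), hne, hA⟩
    · simpa [J, Nat.sub_add_cancel hs, Fin.last] using hlast
  · rintro ⟨p, s, J, hp, hpJ, hJ⟩
    refine ⟨s + 1, Fin.cons p fun t => J t, Fin.strictMono_iff_lt_succ.2 fun t => ?_,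
      by omega, by simpa using hpJ, fun t ht => ?_, by simpa using hJ.2⟩
    · cases t using Fin.cases with
      | zero => simpa using hp
      | succ t => simpa using (hJ.1 t t.2).1
    · obtain ⟨t, rfl⟩ := Fin.exists_succ_eq.2 (Fin.pos_iff_ne_zero.1 ht)
      simpa [← Fin.succ_castSucc] using (hJ.1 t (by omega)).2

local notation "cI" => fun j k => A (i j) (i k)
local notation "ℓI" => fun j => lam (i j)

lemma startsLamWalk_of_lam_pos {k : Fin n} (h : 0 < lam (i k)) : StartsLamWalk A lam i k :=
  ⟨0, fun _ => k, rfl, fun v hv => absurd hv (Nat.not_lt_zero v), h⟩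

lemma lam_eq_zero_of_not_startsLamWalk (hlam : ∀ a, 0 ≤ lam a) {k : Fin n}
    (hk : ¬ StartsLamWalk A lam i k) : lam (i k) = 0 :=
  le_antisymm (not_lt.1 fun h => hk (startsLamWalk_of_lam_pos h)) (hlam _)

lemma StartsLamWalk.of_step {k q : Fin n} (hq : StartsLamWalk A lam i q)
    (hstep : IsStep A i k q) : StartsLamWalk A lam i k := by
  obtain ⟨s, J, rfl, hJ⟩ := hq
  exact ⟨s + 1, _, rfl, hJ.cons hstep⟩

lemma not_startsLamWalk_of_avoiding (hav : HesitantLambdaWalkAvoiding A lam i) {p q : Fin n}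
    (hpq : p < q) (hi : i p = i q) : ¬ StartsLamWalk A lam i q := by
  rintro ⟨s, J, rfl, hJ⟩
  exact not_hesitantLambdaWalkAvoiding_iff.2 ⟨p, s, J, hpq, hi, hJ⟩ hav

/-- The hypothesis on `x` holds both on `GKcube` and on the image of `GKparam` of the unit cube.
Downward induction: where no `λ`-walk starts, `x` vanishes, since a nonzero coupling to a later
position either repeats the letter (excluded by avoidance) or is a step of a `λ`-walk. -/
theorem GKA_nonneg_of_avoiding (hoff : ∀ a b, a ≠ b → A a b ≤ 0) (hlam : ∀ a, 0 ≤ lam a)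
    (hav : HesitantLambdaWalkAvoiding A lam i) {x : Fin n → ℝ}
    (hx : ∀ j, 0 ≤ GKA cI ℓI j x → 0 ≤ x j ∧ x j ≤ GKA cI ℓI j x) (j : Fin n) :
    0 ≤ GKA cI ℓI j x := by
  suffices ∀ j, 0 ≤ GKA cI ℓI j x ∧ (¬ StartsLamWalk A lam i j → GKA cI ℓI j x = 0) from
    (this j).1
  intro j
  induction j using WellFoundedGT.induction with
  | _ j ih =>
  have hxk : ∀ k, j < k → 0 ≤ x k ∧ (¬ StartsLamWalk A lam i k → x k = 0) := fun k hk =>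
    have hxk := hx k (ih k hk).1
    ⟨hxk.1, fun hd => le_antisymm ((ih k hk).2 hd ▸ hxk.2) hxk.1⟩
  have hrep : ∀ k, j < k → i j = i k → x k = 0 := fun k hk hik =>
    (hxk k hk).2 (not_startsLamWalk_of_avoiding hav hk hik)
  constructor
  · have hsum : ∑ k with j < k, (A (i j) (i k) : ℝ) * x k ≤ 0 := by
      refine sum_nonpos fun k hk => ?_
      have hk := (mem_filter.1 hk).2
      by_cases hik : i j = i k
      · rw [hrep k hk hik, mul_zero]
      · exact mul_nonpos_of_nonpos_of_nonneg (by exact_mod_cast hoff _ _ hik) (hxk k hk).1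
    have : (0 : ℝ) ≤ lam (i j) := by exact_mod_cast hlam (i j)
    simp only [GKA]
    linarith
  · intro hj
    have hsum : ∑ k with j < k, (A (i j) (i k) : ℝ) * x k = 0 := by
      refine sum_eq_zero fun k hk => ?_
      have hk := (mem_filter.1 hk).2
      by_cases hik : i j = i k
      · rw [hrep k hk hik, mul_zero]
      by_cases hA : A (i j) (i k) = 0
      · simp [hA]
      have hstep : IsStep A i j k := ⟨hk, hik, (hoff _ _ hik).lt_of_ne hA⟩
      rw [(hxk k hk).2 fun hk => hj (hk.of_step hstep), mul_zero]
    simp [GKA, hsum, lam_eq_zero_of_not_startsLamWalk hlam hj]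

lemma GKcube_eq_GKpolytope_of_avoiding (hoff : ∀ a b, a ≠ b → A a b ≤ 0)
    (hlam : ∀ a, 0 ≤ lam a) (hav : HesitantLambdaWalkAvoiding A lam i) :
    GKcube cI ℓI = GKpolytope cI ℓI := by
  refine subset_antisymm (fun x hx j => ?_) (GKpolytope_subset_GKcube _ _)
  have hx' : ∀ j, 0 ≤ GKA cI ℓI j x → 0 ≤ x j ∧ x j ≤ GKA cI ℓI j x := fun j hj =>
    (hx j).resolve_left fun h => (h.1.trans h.2).not_ge hj
  exact hx' j (GKA_nonneg_of_avoiding hoff hlam hav hx' j)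

lemma GKparam_mem_GKpolytope_of_avoiding (hoff : ∀ a b, a ≠ b → A a b ≤ 0)
    (hlam : ∀ a, 0 ≤ lam a) (hav : HesitantLambdaWalkAvoiding A lam i) {t : Fin n → ℝ}
    (ht : t ∈ Set.Icc 0 1) : GKparam cI ℓI t ∈ GKpolytope cI ℓI := by
  have hx : ∀ j, 0 ≤ GKA cI ℓI j (GKparam cI ℓI t) →
      0 ≤ GKparam cI ℓI t j ∧ GKparam cI ℓI t j ≤ GKA cI ℓI j (GKparam cI ℓI t) :=
    fun j hj => by
      rw [GKparam_apply]
      exact ⟨mul_nonneg (ht.1 j) hj, mul_le_of_le_one_left hj (ht.2 j)⟩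
  exact fun j => hx j (GKA_nonneg_of_avoiding hoff hlam hav hx j)

theorem untwisted_of_avoiding (hoff : ∀ a b, a ≠ b → A a b ≤ 0) (hlam : ∀ a, 0 ≤ lam a)
    (hav : HesitantLambdaWalkAvoiding A lam i) : GKUntwisted cI ℓI := by
  have hP := GKcube_eq_GKpolytope_of_avoiding hoff hlam hav
  refine ⟨hP ▸ isClosed_GKpolytope _ _, hP ▸ convex_GKpolytope _ _,
    ⟨GKvertices cI ℓI, hP ▸ GKpolytope_eq_convexHull _ _ fun t ht =>
      GKparam_mem_GKpolytope_of_avoiding hoff hlam hav ht⟩, fun x hx => ?_⟩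
  rw [GKrho_eq_neg_one_pow _ _ hx, filter_eq_empty_iff.2 fun k _ => not_lt.2 ((hP ▸ hx) k).1,
    card_empty, pow_zero]

variable (A lam i) in
/-- The hesitant `λ`-walk `(p, w 0, …, w m)` with `m` least and then `p` last has the
properties after `label`: otherwise a truncation, a tail, or a shortcut of `w` would be shorter. -/
structure IsReducedHesitantWalk (p : Fin n) (m : ℕ) (w : ℕ → Fin n) : Prop where
  walk : IsLamWalk A lam i m w
  lt : p < w 0
  label : i p = i (w 0)
  lam_eq_zero : ∀ v < m, lam (i (w v)) = 0
  label_ne : ∀ u ≤ m, ∀ k, k < w u → i k = i (w u) → u = 0 ∧ k ≤ p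
  cartan_eq_zero : ∀ v q, v + 2 ≤ q → q ≤ m → A (i (w v)) (i (w q)) = 0

theorem exists_isReducedHesitantWalk (hoff : ∀ a b, a ≠ b → A a b ≤ 0)
    (hlam : ∀ a, 0 ≤ lam a) (hav : ¬ HesitantLambdaWalkAvoiding A lam i) :
    ∃ p m w, IsReducedHesitantWalk A lam i p m w := by
  classical
  have hex : ∃ m J, (∃ p < J 0, i p = i (J 0)) ∧ IsLamWalk A lam i m J := by
    obtain ⟨p, s, J, hp, hpJ, hJ⟩ := not_hesitantLambdaWalkAvoiding_iff.1 hav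
    exact ⟨s, J, ⟨p, hp, hpJ⟩, hJ⟩
  obtain ⟨w, hrep, hw⟩ := Nat.find_spec hex
  set m := Nat.find hex
  have hmin : ∀ m' < m, ∀ J, (∃ p < J 0, i p = i (J 0)) → ¬ IsLamWalk A lam i m' J :=
    fun m' hm' J hrep hJ => Nat.find_min hex hm' ⟨J, hrep, hJ⟩
  set S := univ.filter fun k => k < w 0 ∧ i k = i (w 0)
  have hS : S.Nonempty := by
    obtain ⟨p, hp, hpw⟩ := hrep
    exact ⟨p, mem_filter.2 ⟨mem_univ _, hp, hpw⟩⟩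
  obtain ⟨hp, hpw⟩ := (mem_filter.1 (S.max'_mem hS)).2
  have label_ne : ∀ u ≤ m, ∀ k, k < w u → i k = i (w u) → u = 0 ∧ k ≤ S.max' hS := by
    intro u hu k hk hik
    rcases Nat.eq_zero_or_pos u with rfl | hu0
    · exact ⟨rfl, S.le_max' k (mem_filter.2 ⟨mem_univ _, hk, hik⟩)⟩
    · exact (hmin (m - u) (by omega) _ ⟨k, by simpa using hk, by simpa using hik⟩ (hw.drop hu)).elim
  refine ⟨S.max' hS, m, w, hw, hp, hpw, fun v hv => ?_, label_ne, fun v q hvq hq => ?_⟩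
  · by_contra h
    exact hmin v hv w hrep (hw.truncate hv.le ((hlam _).lt_of_ne' h))
  · by_contra h
    have hlt : w v < w q := (hw.lt_iff_lt (by omega) hq).2 (by omega)
    have hne : i (w v) ≠ i (w q) := fun he => by
      have := (label_ne q hq (w v) hlt he).1
      omega
    exact hmin _ (by omega) _ (by simpa using hrep)
      (hw.shortcut (by omega : v < q) hq ⟨hlt, hne, (hoff _ _ hne).lt_of_ne h⟩)

variable (A lam i) in
/-- The solution of the recursion in `IsReducedHesitantWalk.sum_cartan_mul_walkWeight`. -/
def walkWeight (m : ℕ) (w : ℕ → Fin n) (v : ℕ) : ℝ :=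
  (∏ u ∈ Ico v m, -(A (i (w u)) (i (w (u + 1))) : ℝ)) * lam (i (w m))

variable {m : ℕ} {w : ℕ → Fin n} {p : Fin n}

lemma walkWeight_pos (hw : IsLamWalk A lam i m w) (v : ℕ) : 0 < walkWeight A lam i m w v := by
  refine mul_pos (prod_pos fun u hu => ?_) (by exact_mod_cast hw.2)
  have := (hw.1 u (mem_Ico.1 hu).2).2.2
  exact neg_pos.2 (by exact_mod_cast this)

lemma walkWeight_self : walkWeight A lam i m w m = lam (i (w m)) := by
  simp [walkWeight]

lemma walkWeight_of_lt {v : ℕ} (hv : v < m) :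
    walkWeight A lam i m w v =
      -(A (i (w v)) (i (w (v + 1))) : ℝ) * walkWeight A lam i m w (v + 1) := by
  rw [walkWeight, walkWeight, prod_eq_prod_Ico_succ_bot hv, mul_assoc]

variable (A lam i) in
/-- Any value in `(-walkWeight 0, -walkWeight 0 / 2]` would do at `p`: `GKA` is `-walkWeight 0`
at `p` and `-walkWeight 0 - 2 x p` at earlier positions carrying the letter `i p`. -/
noncomputable def witness (p : Fin n) (m : ℕ) (w : ℕ → Fin n) : Fin n → ℝ :=
  ∑ u ∈ range (m + 1), Pi.single (w u) (walkWeight A lam i m w u)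
    - Pi.single p (walkWeight A lam i m w 0 / 2)

local notation "B" => walkWeight A lam i m w

lemma witness_apply_of_ne {k : Fin n} (hk : ∀ u ≤ m, w u ≠ k) (hkp : k ≠ p) :
    witness A lam i p m w k = 0 := by
  rw [witness, Pi.sub_apply, Finset.sum_apply, Pi.single_eq_of_ne hkp,
    sum_eq_zero fun u hu => Pi.single_eq_of_ne (hk u (mem_range_succ_iff.1 hu)).symm _,
    sub_zero]

lemma GKA_witness (k : Fin n) :
    GKA cI ℓI k (witness A lam i p m w) = lam (i k)
      - ∑ u ∈ range (m + 1), (if k < w u then (A (i k) (i (w u)) : ℝ) * B u else 0)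
      + if k < p then (A (i k) (i p) : ℝ) * (B 0 / 2) else 0 :=
  GKA_sum_single_sub_single _ _ k _ w _ p _

namespace IsReducedHesitantWalk

variable (h : IsReducedHesitantWalk A lam i p m w)
include h

lemma lt_walk {u : ℕ} (hu : u ≤ m) : p < w u :=
  h.lt.trans_le (h.walk.strictMonoOn.monotoneOn (Set.mem_Iic.2 (Nat.zero_le m)) hu u.zero_le)

lemma sum_cartan_mul_walkWeight {v : ℕ} (hv : v ≤ m) :
    ∑ u ∈ range (m + 1), (if v < u then (A (i (w v)) (i (w u)) : ℝ) * B u else 0) =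
      lam (i (w v)) - B v := by
  rcases hv.lt_or_eq with hv | rfl
  · rw [sum_eq_single_of_mem (v + 1) (mem_range.2 (by omega)), if_pos v.lt_succ_self,
      walkWeight_of_lt hv, h.lam_eq_zero v hv]
    · push_cast
      ring
    · intro u hu hne
      split_ifs with hvu
      · rw [h.cartan_eq_zero v u (by omega) (mem_range_succ_iff.1 hu)]
        simp
      · rfl
  · rw [sum_eq_zero fun u hu => if_neg (by simp at hu; omega), walkWeight_self, sub_self]

lemma witness_apply_walk {v : ℕ} (hv : v ≤ m) : witness A lam i p m w (w v) = B v := by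
  have hinj := h.walk.strictMonoOn.injOn
  rw [witness, Pi.sub_apply, Finset.sum_apply, Pi.single_apply, if_neg (h.lt_walk hv).ne',
    sum_eq_single_of_mem v (mem_range.2 (by omega)), Pi.single_eq_same, sub_zero]
  intro u hu hne
  exact Pi.single_eq_of_ne (fun he => hne (hinj (Set.mem_Iic.2 (mem_range_succ_iff.1 hu))
    (Set.mem_Iic.2 hv) he.symm)) _

lemma witness_apply_self : witness A lam i p m w p = -(B 0 / 2) := by
  rw [witness, Pi.sub_apply, Finset.sum_apply, Pi.single_eq_same,
    sum_eq_zero fun u hu => Pi.single_eq_of_ne (h.lt_walk (mem_range_succ_iff.1 hu)).ne _,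
    zero_sub]

lemma GKA_witness_walk {v : ℕ} (hv : v ≤ m) : GKA cI ℓI (w v) (witness A lam i p m w) = B v := by
  have hsum := h.sum_cartan_mul_walkWeight hv
  rw [GKA_witness, if_neg (h.lt_walk hv).not_gt, add_zero,
    ← sub_sub_cancel (lam (i (w v)) : ℝ) (B v), ← hsum]
  congr 1
  exact sum_congr rfl fun u hu => by
    simp only [h.walk.lt_iff_lt hv (mem_range_succ_iff.1 hu)]

lemma sum_cartan_mul_walkWeight_of_label (hdiag : ∀ a, A a a = 2) {k : Fin n} (hk : k < w 0)
    (hik : i k = i (w 0)) :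
    ∑ u ∈ range (m + 1), (if k < w u then (A (i k) (i (w u)) : ℝ) * B u else 0) =
      B 0 + lam (i (w 0)) := by
  have hsum := h.sum_cartan_mul_walkWeight (Nat.zero_le m)
  rw [sum_range_succ'] at hsum ⊢
  simp only [Nat.succ_pos, if_true, lt_irrefl, if_false, add_zero] at hsum
  rw [sum_congr rfl fun u hu => if_pos (hk.trans ((h.walk.lt_iff_lt (Nat.zero_le m)
    (mem_range.1 hu)).2 u.succ_pos)), if_pos hk, hik, hsum, hdiag]
  push_cast
  ring

lemma GKA_witness_self (hdiag : ∀ a, A a a = 2) :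
    GKA cI ℓI p (witness A lam i p m w) = -B 0 := by
  rw [GKA_witness, h.sum_cartan_mul_walkWeight_of_label hdiag h.lt h.label, if_neg (lt_irrefl p),
    h.label]
  ring

lemma GKA_witness_of_label (hdiag : ∀ a, A a a = 2) {k : Fin n} (hk : k < p)
    (hik : i k = i p) : GKA cI ℓI k (witness A lam i p m w) = 0 := by
  rw [GKA_witness, h.sum_cartan_mul_walkWeight_of_label hdiag (hk.trans h.lt) (hik.trans h.label),
    if_pos hk, hik, hdiag, h.label]
  push_cast
  ring

lemma GKA_witness_nonneg (hoff : ∀ a b, a ≠ b → A a b ≤ 0) (hlam : ∀ a, 0 ≤ lam a)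
    {k : Fin n} (hkp : k ≠ p) (hlabel : ¬ (k < p ∧ i k = i p)) :
    0 ≤ GKA cI ℓI k (witness A lam i p m w) := by
  have hne : ∀ u ≤ m, k < w u → i k ≠ i (w u) := fun u hu hk hik => by
    obtain ⟨rfl, hkp'⟩ := h.label_ne u hu k hk hik
    exact hlabel ⟨hkp'.lt_of_ne hkp, hik.trans h.label.symm⟩
  have hcoef : ∀ u ≤ m, k < w u → (A (i k) (i (w u)) : ℝ) ≤ 0 := fun u hu hk => by
    exact_mod_cast hoff _ _ (hne u hu hk)
  have hrest : ∑ u ∈ range m, (if k < w (u + 1) then (A (i k) (i (w (u + 1))) : ℝ) * B (u + 1)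
      else 0) ≤ 0 := by
    refine sum_nonpos fun u hu => ?_
    split_ifs with hk
    · exact mul_nonpos_of_nonpos_of_nonneg (hcoef _ (mem_range.1 hu) hk)
        (walkWeight_pos h.walk _).le
    · exact le_rfl
  have hB := walkWeight_pos h.walk 0
  have hlamk : (0 : ℝ) ≤ lam (i k) := by exact_mod_cast hlam (i k)
  rw [GKA_witness, sum_range_succ', h.label]
  split_ifs with hk0 hkp' hkp'
  · nlinarith [hcoef 0 m.zero_le hk0]
  · nlinarith [hcoef 0 m.zero_le hk0]
  · exact absurd (hkp'.trans h.lt) hk0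
  · linarith

theorem witness_mem_GKcube (hdiag : ∀ a, A a a = 2) (hoff : ∀ a b, a ≠ b → A a b ≤ 0)
    (hlam : ∀ a, 0 ≤ lam a) : witness A lam i p m w ∈ GKcube cI ℓI := by
  intro k
  by_cases hkw : ∃ v ≤ m, w v = k
  · obtain ⟨v, hv, rfl⟩ := hkw
    rw [h.witness_apply_walk hv, h.GKA_witness_walk hv]
    exact .inr ⟨(walkWeight_pos h.walk v).le, le_rfl⟩
  push Not at hkw
  by_cases hkp : k = p
  · subst hkp
    rw [h.witness_apply_self, h.GKA_witness_self hdiag]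
    have := walkWeight_pos h.walk 0
    exact .inl ⟨by linarith, by linarith⟩
  rw [witness_apply_of_ne hkw hkp]
  by_cases hlabel : k < p ∧ i k = i p
  · exact .inr ⟨le_rfl, (h.GKA_witness_of_label hdiag hlabel.1 hlabel.2).ge⟩
  · exact .inr ⟨le_rfl, h.GKA_witness_nonneg hoff hlam hkp hlabel⟩

lemma filter_witness_lt_zero : univ.filter (fun k => witness A lam i p m w k < 0) = {p} := by
  ext k
  simp only [mem_filter, mem_univ, true_and, mem_singleton]
  refine ⟨fun hk => by_contra fun hkp => ?_, fun hk => ?_⟩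
  · by_cases hkw : ∃ v ≤ m, w v = k
    · obtain ⟨v, hv, rfl⟩ := hkw
      exact (walkWeight_pos h.walk v).not_gt (h.witness_apply_walk hv ▸ hk)
    · push Not at hkw
      exact (witness_apply_of_ne hkw hkp ▸ hk).false
  · rw [hk, h.witness_apply_self]
    linarith [walkWeight_pos h.walk 0]

theorem not_GKUntwisted (hdiag : ∀ a, A a a = 2) (hoff : ∀ a b, a ≠ b → A a b ≤ 0)
    (hlam : ∀ a, 0 ≤ lam a) : ¬ GKUntwisted cI ℓI := fun hu => by
  have hmem := h.witness_mem_GKcube hdiag hoff hlam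
  have hrho := hu.2.2.2 _ hmem
  rw [GKrho_eq_neg_one_pow _ _ hmem, h.filter_witness_lt_zero, card_singleton] at hrho
  norm_num at hrho

end IsReducedHesitantWalk

end GK

/-- Main theorem.  Let `A` be the Cartan matrix of a complex
semisimple Lie algebra of rank `r`, `i = (i_1,…,i_n)` a word with entries in
`{1,…,r}`, and `λ` a dominant weight.  With `c_{jk} = A_{i_j i_k}` and
`ℓ_j = λ_{i_j}`, the Grossberg–Karshon twisted cube `(C(c,ℓ), ρ)` is untwisted
if and only if `i` is hesitant-`λ`-walk-avoiding. -/
theorem statement5 {r n : ℕ} (A : Matrix (Fin r) (Fin r) ℤ)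
    (hA : IsCartanMatrix A) (lam : Fin r → ℤ) (hlam : ∀ a, 0 ≤ lam a)
    (i : Fin n → Fin r) :
    GKUntwisted (fun j k => A (i j) (i k)) (fun j => lam (i j)) ↔
      HesitantLambdaWalkAvoiding A lam i := by
  refine ⟨fun hu => by_contra fun hav => ?_, GK.untwisted_of_avoiding hA.2.1 hlam⟩
  obtain ⟨p, m, w, h⟩ := GK.exists_isReducedHesitantWalk hA.2.1 hlam hav
  exact h.not_GKUntwisted hA.1 hA.2.1 hlam hu
end

section
/- Let A be the Cartan matrix of a complex semisimple Lie algebra of rank r, let I = (i_1,…,i_n) be a word with entries in {1,…,r}, and let λ = (λ_1,…,λ_r) be a dominant weight; set c_{jk} = A_{i_j i_k} and ℓ_j = λ_{i_j}, and let m_σ be the associated integer vectors. If there exist σ ∈ {+,−}^n and k ∈ {1,…,n} such that m_{σ,k} > 0 and m_{σ,i} ≥ 0 for all i > k, then there exists a subword J = (i_{j_1}, i_{j_2}, …, i_{j_s}) of I, of length s ≥ 1, such that j_1 = k and J is a λ-walk (i.e. J is a diagram walk whose final root satisfies λ_{i_{j_s}} > 0). -/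
open Finset

/-!
As `m_{σ,p} ≥ 0` beyond `k`, positivity of `m_σ` moves forward: if `ℓ_j ≤ 0` then
`m_{σ,j} > 0` forces `σ_j = −` and `Σ_{s>j} c_{js} m_{σ,s} < 0`, so some later `s` has
`c_{js} < 0` and `m_{σ,s} > 0`. The resulting chain of indices starting at `k` increases, so it
stops, necessarily at an index with `ℓ > 0`; and
`A_{i_j i_s} < 0` makes consecutive roots distinct and adjacent, as `A` has `2` on its diagonal.
-/

namespace GKm

variable {n : ℕ} (c : Fin n → Fin n → ℤ) (ℓ : Fin n → ℤ) (σ : Fin n → Bool)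

theorem eq_of_true {k : Fin n} (hσ : σ k = true) :
    GKm c ℓ σ k = ℓ k - ∑ s ∈ univ.filter (k < ·), c k s * GKm c ℓ σ s := by
  rw [GKm, if_pos hσ, Finset.sum_attach _ (fun s => c k s * GKm c ℓ σ s)]

theorem eq_zero_of_false {k : Fin n} (hσ : σ k = false) : GKm c ℓ σ k = 0 := by
  rw [GKm, if_neg (by simp [hσ])]

variable {c ℓ σ}

theorem exists_lt_neg_coeff_pos_of_nonpos {k : Fin n} (hℓ : ℓ k ≤ 0) (hk : 0 < GKm c ℓ σ k)
    (hge : ∀ p, k < p → 0 ≤ GKm c ℓ σ p) :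
    ∃ s, k < s ∧ c k s < 0 ∧ 0 < GKm c ℓ σ s := by
  have hσ : σ k = true := by
    by_contra hσ
    rw [eq_zero_of_false c ℓ σ (Bool.eq_false_iff.mpr hσ)] at hk
    exact hk.false
  rw [eq_of_true c ℓ σ hσ] at hk
  have hsum : ∑ s ∈ univ.filter (k < ·), c k s * GKm c ℓ σ s <
      ∑ s ∈ univ.filter (k < ·), 0 := by
    rw [Finset.sum_const_zero]
    omega
  obtain ⟨s, hs, hneg⟩ := Finset.exists_lt_of_sum_lt hsum
  have hks : k < s := (Finset.mem_filter.mp hs).2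
  have hc : c k s < 0 := neg_of_mul_neg_left hneg (hge s hks)
  exact ⟨s, hks, hc, pos_of_mul_neg_right hneg hc.le⟩

theorem exists_neg_coeff_chain {k : Fin n} (hk : 0 < GKm c ℓ σ k)
    (hge : ∀ p, k < p → 0 ≤ GKm c ℓ σ p) :
    ∃ (s : ℕ) (j : Fin (s + 1) → Fin n), StrictMono j ∧ j 0 = k ∧
      (∀ t : Fin s, c (j t.castSucc) (j t.succ) < 0) ∧ 0 < ℓ (j (Fin.last s)) := by
  by_cases hℓ : 0 < ℓ k
  · exact ⟨0, fun _ => k, Subsingleton.strictMono (α := Fin 1) _, rfl, Fin.elim0, hℓ⟩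
  obtain ⟨k', hkk', hc, hk'⟩ := exists_lt_neg_coeff_pos_of_nonpos (not_lt.mp hℓ) hk hge
  obtain ⟨s, j, hmono, hj0, hchain, hlast⟩ :=
    exists_neg_coeff_chain hk' fun p hp => hge p (hkk'.trans hp)
  refine ⟨s + 1, Fin.cons k j, Fin.strictMono_cons.mpr ⟨fun t => ?_, hmono⟩, rfl,
    Fin.cases (by simpa [hj0] using hc) (fun t => by simpa using hchain t), by simpa using hlast⟩
  exact hkk'.trans_le (by simpa [hj0] using hmono.monotone (Fin.zero_le t))
termination_by n - k.val
decreasing_by omega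

end GKm

theorem statement8_general {r n : ℕ} (A : Matrix (Fin r) (Fin r) ℤ)
    (hA : IsCartanMatrix A) (lam : Fin r → ℤ)
    (i : Fin n → Fin r) (σ : Fin n → Bool) (k : Fin n)
    (hk : 0 < GKm (fun j k => A (i j) (i k)) (fun j => lam (i j)) σ k)
    (hge : ∀ p : Fin n, k < p →
      0 ≤ GKm (fun j k => A (i j) (i k)) (fun j => lam (i j)) σ p) :
    ∃ (s : ℕ) (j : Fin (s + 1) → Fin n), StrictMono j ∧ j 0 = k ∧
      IsLambdaWalkSeq A lam (i ∘ j) := by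
  obtain ⟨s, j, hmono, hj0, hchain, hlast⟩ := GKm.exists_neg_coeff_chain hk hge
  refine ⟨s, j, hmono, hj0, fun t => ⟨fun heq => ?_, hchain t⟩, hlast⟩
  have hneg := hchain t
  simp only [Function.comp_apply] at heq
  simp only [heq, hA.1] at hneg
  omega

/-- With `A` a Cartan matrix, `i` a word, `λ` dominant,
`c_{jk} = A_{i_j i_k}`, `ℓ_j = λ_{i_j}`: if there are `σ ∈ {+,−}^n` and `k`
with `m_{σ,k} > 0` and `m_{σ,p} ≥ 0` for all `p > k`, then there is a subword
`J = (i_{j_1}, …, i_{j_s})` of `i` with `s ≥ 1`, `j_1 = k`, which is a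
`λ`-walk. -/
theorem statement8 {r n : ℕ} (A : Matrix (Fin r) (Fin r) ℤ)
    (hA : IsCartanMatrix A) (lam : Fin r → ℤ) (hlam : ∀ a, 0 ≤ lam a)
    (i : Fin n → Fin r) (σ : Fin n → Bool) (k : Fin n)
    (hk : 0 < GKm (fun j k => A (i j) (i k)) (fun j => lam (i j)) σ k)
    (hge : ∀ p : Fin n, k < p →
      0 ≤ GKm (fun j k => A (i j) (i k)) (fun j => lam (i j)) σ p) :
    ∃ (s : ℕ) (j : Fin (s + 1) → Fin n), StrictMono j ∧ j 0 = k ∧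
      IsLambdaWalkSeq A lam (i ∘ j) :=
  statement8_general A hA lam i σ k hk hge
end

section
/- Let A be the Cartan matrix of a complex semisimple Lie algebra of rank r, let I = (i_1,…,i_n) be a word with entries in {1,…,r}, and let λ = (λ_1,…,λ_r) be a dominant weight; let (C(c,ℓ), ρ) be the associated Grossberg–Karshon twisted cube (c_{jk} = A_{i_j i_k}, ℓ_j = λ_{i_j}). If I contains a subword J = (i_{j_0}, i_{j_1}) of length 2 which is a hesitant λ-walk (i.e. i_{j_0} = i_{j_1} and λ_{i_{j_1}} > 0), then (C(c,ℓ), ρ) is twisted. -/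
open Finset

/-! Let `m` be the last position before `j1` carrying the letter `i j1`, and `L = λ_{i j1} > 0`.
The point `x` with `x_{j1} = L`, `x_m = -L/2` and all other coordinates `0` lies in `C(c,ℓ)`, and
`m` is its only negative coordinate, so `ρ(x) = -1`. At `m` the bound is `A_m(x) = L - 2L < x_m`.
At any other position `j < j1` the condition reads `λ_a - A_{a,i j1} t ≥ 0` with `a = i j`, where
`t = L/2` before `m` and `t = L` after `m`: off-diagonal Cartan entries are nonpositive, and the
diagonal case `a = i j1` occurs only before `m`, where it reads `L - 2 · L/2 ≥ 0`.
-/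
theorem exists_last_lt_of_lt {α : Type*} [LinearOrder α] [LocallyFiniteOrderBot α]
    {P : α → Prop} [DecidablePred P] {a b : α} (hab : a < b) (ha : P a) :
    ∃ m, m < b ∧ P m ∧ ∀ j, m < j → j < b → ¬ P j := by
  obtain ⟨m, hm, hmax⟩ := ((Finset.Iio b).filter P).exists_max_image id ⟨a, by simp [hab, ha]⟩
  simp only [Finset.mem_filter, Finset.mem_Iio, id] at hm hmax
  exact ⟨m, hm.1, hm.2, fun j hmj hjb hj => (hmax j ⟨hjb, hj⟩).not_gt hmj⟩

theorem GKA_single_add_single {n : ℕ} (c : Fin n → Fin n → ℤ) (ℓ : Fin n → ℤ)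
    (j p m : Fin n) (a b : ℝ) :
    GKA c ℓ j (Pi.single p a + Pi.single m b) =
      ℓ j - ((if j < p then c j p * a else 0) + (if j < m then c j m * b else 0)) := by
  simp [GKA, Pi.single_apply, mul_add, Finset.sum_add_distrib]

theorem GKrho_eq_neg_one_pow_card_neg {n : ℕ} {c : Fin n → Fin n → ℤ} {ℓ : Fin n → ℤ}
    {x : Fin n → ℝ} (hx : x ∈ GKcube c ℓ) :
    GKrho c ℓ x = (-1) ^ #{k | x k < 0} := by
  classical
  have hcard := card_filter_add_card_filter_not (s := univ) (fun k => x k < 0)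
  rw [card_univ, Fintype.card_fin] at hcard
  have hsplit : (-1 : ℝ) ^ n = (-1) ^ #{k | x k < 0} * (-1) ^ #{k | ¬ x k < 0} := by
    rw [← pow_add, hcard]
  simp only [GKrho, hx, if_true, GKsgn, prod_ite, prod_const_one, prod_const, one_mul]
  rw [hsplit, mul_assoc, ← pow_add, ← two_mul, pow_mul, neg_one_sq, one_pow, mul_one]

theorem card_neg_single_add_single {ι : Type*} [Fintype ι] [DecidableEq ι] {p m : ι}
    (hmp : m ≠ p) {a b : ℝ} (ha : 0 ≤ a) (hb : b < 0) :
    #{k | (Pi.single p a + Pi.single m b : ι → ℝ) k < 0} = 1 := by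
  rw [card_eq_one]
  refine ⟨m, ext fun k => ?_⟩
  by_cases hkm : k = m
  · simp [hkm, hmp, hb]
  · by_cases hkp : k = p <;> simp [hkm, hkp, hmp.symm, Pi.single_apply, ha.not_gt]

section CartanWord

variable {r n : ℕ} {A : Matrix (Fin r) (Fin r) ℤ} {lam : Fin r → ℤ}

theorem lam_sub_cartan_mul_nonneg (hdiag : ∀ a, A a a = 2) (hoff : ∀ a b, a ≠ b → A a b ≤ 0)
    (hlam : ∀ a, 0 ≤ lam a) {a b : Fin r} {t : ℝ} (ht : 0 ≤ t) (hab : a = b → 2 * t ≤ lam b) :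
    0 ≤ (lam a : ℝ) - A a b * t := by
  have hla : (0 : ℝ) ≤ lam a := by exact_mod_cast hlam a
  by_cases h : a = b
  · subst h
    rw [hdiag]
    push_cast
    linarith [hab rfl]
  · have hA : (A a b : ℝ) ≤ 0 := by exact_mod_cast hoff a b h
    nlinarith

theorem single_add_single_mem_GKcube {i : Fin n → Fin r} (hdiag : ∀ a, A a a = 2)
    (hoff : ∀ a b, a ≠ b → A a b ≤ 0) (hlam : ∀ a, 0 ≤ lam a) {m p : Fin n} (hmp : m < p)
    (hmi : i m = i p) (hgap : ∀ j, m < j → j < p → i j ≠ i p) (hpos : 0 < lam (i p)) :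
    Pi.single p (lam (i p) : ℝ) + Pi.single m (-(lam (i p) : ℝ) / 2) ∈
      GKcube (fun j k => A (i j) (i k)) (fun j => lam (i j)) := by
  have hL : (0 : ℝ) < lam (i p) := by exact_mod_cast hpos
  have hla : ∀ a, (0 : ℝ) ≤ lam a := fun a => by exact_mod_cast hlam a
  intro j
  simp only [GKA_single_add_single, Pi.add_apply, Pi.single_apply, hmi]
  rcases lt_trichotomy j m with hjm | rfl | hmj
  · have hjp := hjm.trans hmp
    right
    simp only [hjm, hjp, hjm.ne, hjp.ne, if_true, if_false, add_zero, le_refl, true_and]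
    have := lam_sub_cartan_mul_nonneg hdiag hoff hlam (a := i j) (b := i p) (t := lam (i p) / 2)
      (by positivity) fun _ => by linarith
    linarith
  · left
    simp only [hmp, hmp.ne, lt_irrefl, if_true, if_false, zero_add, add_zero, hmi, hdiag]
    push_cast
    constructor <;> linarith
  · rcases lt_trichotomy j p with hjp | rfl | hpj
    · right
      simp only [hjp, hjp.ne, hmj.ne', not_lt_of_gt hmj, if_true, if_false, add_zero, le_refl,
        true_and]
      exact lam_sub_cartan_mul_nonneg hdiag hoff hlam hL.le fun h => absurd h (hgap j hmj hjp)
    · right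
      simp only [hmj.ne', not_lt_of_gt hmj, lt_irrefl, if_true, if_false, add_zero]
      constructor <;> linarith
    · right
      simp only [hpj.ne', (hmp.trans hpj).ne', not_lt_of_gt hpj, not_lt_of_gt (hmp.trans hpj),
        if_false, add_zero, le_refl, true_and, sub_zero]
      exact hla _

end CartanWord

/-- With `A` a Cartan matrix, `i` a word, `λ` dominant,
`c_{jk} = A_{i_j i_k}`, `ℓ_j = λ_{i_j}`: if `i` contains a subword
`(i_{j_0}, i_{j_1})` of length `2` which is a hesitant `λ`-walk (i.e.
`i_{j_0} = i_{j_1}` and `λ_{i_{j_1}} > 0`), then the Grossberg–Karshon twisted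
cube is twisted. -/
theorem statement9 {r n : ℕ} (A : Matrix (Fin r) (Fin r) ℤ)
    (hA : IsCartanMatrix A) (lam : Fin r → ℤ) (hlam : ∀ a, 0 ≤ lam a)
    (i : Fin n → Fin r) (j0 j1 : Fin n) (h01 : j0 < j1)
    (heq : i j0 = i j1) (hpos : 0 < lam (i j1)) :
    ¬ GKUntwisted (fun j k => A (i j) (i k)) (fun j => lam (i j)) := by
  obtain ⟨hdiag, hoff, -, -⟩ := hA
  rintro ⟨-, -, -, hrho⟩
  obtain ⟨m, hmj1, hmi, hgap⟩ := exists_last_lt_of_lt (P := fun j => i j = i j1) h01 heq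
  have hx := single_add_single_mem_GKcube hdiag hoff hlam hmj1 hmi hgap hpos
  have hL : (0 : ℝ) < lam (i j1) := by exact_mod_cast hpos
  have hρ := hrho _ hx
  rw [GKrho_eq_neg_one_pow_card_neg hx,
    card_neg_single_add_single hmj1.ne hL.le (by linarith)] at hρ
  norm_num at hρ
end
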